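/- arXiv:math/0610691 — 4 statements merged into one kernel-verified Lean document; each statement's English description precedes it below -/
import Mathlib

section
/- The ordered monomials {a^i b^j c^k d^l : i,j,k,l ∈ ℕ} form a ℤ[q,q⁻¹]-basis of O_q(M_2), i.e. they are linearly independent and span. -/
open LaurentPolynomial FreeAlgebra

noncomputable section

/-- The Laurent polynomial ring `ℤ[q,q⁻¹]`. -/
abbrev Rq : Type := LaurentPolynomial ℤ

/-- Defining relations of the 2×2 quantum matrix algebra over a commutative
ring `k`, with quantum parameter `q` and its inverse `qi`; the generators are
`a = ι 0`, `b = ι 1`, `c = ι 2`, `d = ι 3`. -/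
inductive QMRel (k : Type) [CommRing k] (q qi : k) :
    FreeAlgebra k (Fin 4) → FreeAlgebra k (Fin 4) → Prop
  | ab : QMRel k q qi (ι k 0 * ι k 1) (q • (ι k 1 * ι k 0))
  | ac : QMRel k q qi (ι k 0 * ι k 2) (q • (ι k 2 * ι k 0))
  | bd : QMRel k q qi (ι k 1 * ι k 3) (q • (ι k 3 * ι k 1))
  | cd : QMRel k q qi (ι k 2 * ι k 3) (q • (ι k 3 * ι k 2))
  | bc : QMRel k q qi (ι k 1 * ι k 2) (ι k 2 * ι k 1)
  | ad : QMRel k q qi (ι k 0 * ι k 3)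
      (ι k 3 * ι k 0 + (q - qi) • (ι k 1 * ι k 2))

/-- The 2×2 quantum matrix algebra `O_q(M_2)` over `k`. -/
abbrev QM (k : Type) [CommRing k] (q qi : k) := RingQuot (QMRel k q qi)

/-- The four generators of the quantum matrix algebra. -/
def gen (k : Type) [CommRing k] (q qi : k) (i : Fin 4) : QM k q qi :=
  RingQuot.mkAlgHom k (QMRel k q qi) (ι k i)

/-- `O_q(M_2)` over `ℤ[q,q⁻¹]`. -/
abbrev OqM2 : Type := QM Rq (T 1) (T (-1))
abbrev aq : OqM2 := gen Rq (T 1) (T (-1)) 0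
abbrev bq : OqM2 := gen Rq (T 1) (T (-1)) 1
abbrev cq : OqM2 := gen Rq (T 1) (T (-1)) 2
abbrev dq : OqM2 := gen Rq (T 1) (T (-1)) 3

/-- The quantum determinant `D_q = ad - q·bc`. -/
def Dq : OqM2 := aq * dq - (T 1 : Rq) • (bq * cq)

/-- The ordered monomial `a^i b^j c^k d^l`. -/
def mono (p : ℕ × ℕ × ℕ × ℕ) : OqM2 :=
  aq ^ p.1 * bq ^ p.2.1 * cq ^ p.2.2.1 * dq ^ p.2.2.2

section Aux

local notation "qq" => (T 1 : Rq)
local notation "qI" => (T (-1) : Rq)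

lemma hqqi : qq * qI = 1 := by rw [← T_add]; norm_num

lemma rel_of (x y : FreeAlgebra Rq (Fin 4)) (h : QMRel Rq qq qI x y) :
    RingQuot.mkAlgHom Rq (QMRel Rq qq qI) x = RingQuot.mkAlgHom Rq (QMRel Rq qq qI) y :=
  RingQuot.mkAlgHom_rel Rq h

lemma rel_ab : aq * bq = qq • (bq * aq) := by
  simpa [gen, map_mul, map_smul] using rel_of _ _ QMRel.ab
lemma rel_ac : aq * cq = qq • (cq * aq) := by
  simpa [gen, map_mul, map_smul] using rel_of _ _ QMRel.ac
lemma rel_bd : bq * dq = qq • (dq * bq) := by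
  simpa [gen, map_mul, map_smul] using rel_of _ _ QMRel.bd
lemma rel_cd : cq * dq = qq • (dq * cq) := by
  simpa [gen, map_mul, map_smul] using rel_of _ _ QMRel.cd
lemma rel_bc : bq * cq = cq * bq := by
  simpa [gen, map_mul] using rel_of _ _ QMRel.bc
lemma rel_ad : aq * dq = dq * aq + (qq - qI) • (bq * cq) := by
  simpa [gen, map_mul, map_smul, map_add] using rel_of _ _ QMRel.ad

lemma qflip {x y : OqM2} (h : x = qq • y) : y = qI • x := by
  rw [h, smul_smul, mul_comm, hqqi, one_smul]

lemma rel_ba : bq * aq = qI • (aq * bq) := qflip rel_ab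
lemma rel_ca : cq * aq = qI • (aq * cq) := qflip rel_ac
lemma rel_db : dq * bq = qI • (bq * dq) := qflip rel_bd
lemma rel_dc : dq * cq = qI • (cq * dq) := qflip rel_cd
lemma rel_da : dq * aq = aq * dq - (qq - qI) • (bq * cq) := by
  rw [rel_ad]; abel

-- power lemmas
lemma pow_comm_gen {x y : OqM2} (h : y * x = qI • (x * y)) (i : ℕ) :
    y * x ^ i = (qI ^ i) • (x ^ i * y) := by
  induction i with
  | zero => simp
  | succ n ih =>
    rw [pow_succ', ← mul_assoc, h]  -- x^(n+1) = x * x^n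
    rw [smul_mul_assoc, mul_assoc, ih, pow_succ]
    rw [mul_smul_comm, smul_smul]
    ring_nf
    rw [mul_assoc]

lemma ba_pow (i : ℕ) : bq * aq ^ i = (qI ^ i) • (aq ^ i * bq) := pow_comm_gen rel_ba i
lemma ca_pow (i : ℕ) : cq * aq ^ i = (qI ^ i) • (aq ^ i * cq) := pow_comm_gen rel_ca i
lemma db_pow (j : ℕ) : dq * bq ^ j = (qI ^ j) • (bq ^ j * dq) := pow_comm_gen rel_db j
lemma dc_pow (k : ℕ) : dq * cq ^ k = (qI ^ k) • (cq ^ k * dq) := pow_comm_gen rel_dc k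
lemma cb_pow (j : ℕ) : cq * bq ^ j = bq ^ j * cq := by
  induction j with
  | zero => simp
  | succ n ih => rw [pow_succ', ← mul_assoc, ← rel_bc, mul_assoc, ih, ← mul_assoc, ← pow_succ']

lemma amono (i j k l : ℕ) : aq * mono (i,j,k,l) = mono (i+1,j,k,l) := by
  simp only [mono, pow_succ', ← mul_assoc]

lemma bmono (i j k l : ℕ) : bq * mono (i,j,k,l) = (qI ^ i) • mono (i,j+1,k,l) := by
  simp only [mono, ← mul_assoc, ba_pow, smul_mul_assoc, pow_succ', ← mul_assoc]

lemma cmono (i j k l : ℕ) : cq * mono (i,j,k,l) = (qI ^ i) • mono (i,j,k+1,l) := by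
  simp only [mono, ← mul_assoc, ca_pow, smul_mul_assoc]
  rw [mul_assoc _ cq, cb_pow, ← mul_assoc, mul_assoc _ cq, ← pow_succ']

lemma dmono_base (j k l : ℕ) : dq * mono (0,j,k,l) = (qI ^ j * qI ^ k) • mono (0,j,k,l+1) := by
  simp only [mono, pow_zero, one_mul, ← mul_assoc, db_pow, smul_mul_assoc]
  rw [mul_assoc _ dq, dc_pow, mul_smul_comm, smul_mul_assoc, smul_smul]
  congr 1
  rw [mul_assoc, mul_assoc, ← pow_succ', ← mul_assoc]

-- Spanning
def Smod : Submodule Rq OqM2 := Submodule.span Rq (Set.range mono)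

lemma mono_mem (p : ℕ × ℕ × ℕ × ℕ) : mono p ∈ Smod := Submodule.subset_span ⟨p, rfl⟩

lemma mulgen_mem {g : OqM2} (hg : ∀ p, g * mono p ∈ Smod) :
    ∀ x ∈ Smod, g * x ∈ Smod := by
  intro x hx
  induction hx using Submodule.span_induction with
  | mem x h => obtain ⟨p, rfl⟩ := h; exact hg p
  | zero => simpa using Smod.zero_mem
  | add x y hx hy ihx ihy => rw [mul_add]; exact Smod.add_mem ihx ihy
  | smul r x hx ihx => rw [mul_smul_comm]; exact Smod.smul_mem _ ihx

lemma amul_mem : ∀ x ∈ Smod, aq * x ∈ Smod :=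
  mulgen_mem (fun ⟨i,j,k,l⟩ => by rw [amono]; exact mono_mem _)
lemma bmul_mem : ∀ x ∈ Smod, bq * x ∈ Smod :=
  mulgen_mem (fun ⟨i,j,k,l⟩ => by rw [bmono]; exact Smod.smul_mem _ (mono_mem _))
lemma cmul_mem : ∀ x ∈ Smod, cq * x ∈ Smod :=
  mulgen_mem (fun ⟨i,j,k,l⟩ => by rw [cmono]; exact Smod.smul_mem _ (mono_mem _))

lemma dmono_mem : ∀ i j k l, dq * mono (i,j,k,l) ∈ Smod := by
  intro i
  induction i with
  | zero =>
    intro j k l; rw [dmono_base]; exact Smod.smul_mem _ (mono_mem _)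
  | succ n ih =>
    intro j k l
    rw [← amono, ← mul_assoc, rel_da, sub_mul, smul_mul_assoc]
    refine Submodule.sub_mem _ ?_ ?_
    · rw [mul_assoc]; exact amul_mem _ (ih j k l)
    · refine Smod.smul_mem _ ?_
      rw [mul_assoc]
      exact bmul_mem _ (cmul_mem _ (mono_mem _))

lemma dmul_mem : ∀ x ∈ Smod, dq * x ∈ Smod :=
  mulgen_mem (fun ⟨i,j,k,l⟩ => dmono_mem i j k l)

lemma genmul_mem (i : Fin 4) : ∀ x ∈ Smod, gen Rq (T 1) (T (-1)) i * x ∈ Smod := by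
  fin_cases i
  exacts [amul_mem, bmul_mem, cmul_mem, dmul_mem]

lemma one_mem_S : (1 : OqM2) ∈ Smod := by
  have : mono (0,0,0,0) = 1 := by simp [mono]
  rw [← this]; exact mono_mem _


lemma powmul_mem {g : OqM2} (hg : ∀ x ∈ Smod, g * x ∈ Smod) (n : ℕ) :
    ∀ x ∈ Smod, g ^ n * x ∈ Smod := by
  induction n with
  | zero => intro x hx; simpa using hx
  | succ m ih =>
    intro x hx
    rw [pow_succ', mul_assoc]
    exact hg _ (ih _ hx)

lemma mono_mul_mem (p : ℕ × ℕ × ℕ × ℕ) : ∀ x ∈ Smod, mono p * x ∈ Smod := by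
  obtain ⟨i, j, k, l⟩ := p
  intro x hx
  show aq ^ i * bq ^ j * cq ^ k * dq ^ l * x ∈ Smod
  rw [mul_assoc, mul_assoc, mul_assoc]
  exact powmul_mem amul_mem i _ (powmul_mem bmul_mem j _ (powmul_mem cmul_mem k _
    (powmul_mem dmul_mem l _ hx)))

lemma mul_mem_S : ∀ x ∈ Smod, ∀ y ∈ Smod, x * y ∈ Smod := by
  intro x hx
  induction hx using Submodule.span_induction with
  | mem x h => obtain ⟨p, rfl⟩ := h; exact mono_mul_mem p
  | zero => intro y hy; simpa using Smod.zero_mem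
  | add a b ha hb iha ihb => intro y hy; rw [add_mul]; exact Smod.add_mem (iha y hy) (ihb y hy)
  | smul r a ha iha => intro y hy; rw [smul_mul_assoc]; exact Smod.smul_mem _ (iha y hy)

lemma span_top : Submodule.span Rq (Set.range mono) = (⊤ : Submodule Rq OqM2) := by
  rw [Submodule.eq_top_iff']
  intro x
  obtain ⟨y, rfl⟩ := RingQuot.mkAlgHom_surjective Rq (QMRel Rq (T 1) (T (-1))) x
  show RingQuot.mkAlgHom Rq _ y ∈ Smod
  induction y using FreeAlgebra.induction with
  | grade0 r =>
    rw [AlgHom.commutes]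
    have : (algebraMap Rq OqM2) r = r • 1 := by rw [Algebra.algebraMap_eq_smul_one]
    rw [this]; exact Smod.smul_mem _ one_mem_S
  | grade1 i => 
    have : RingQuot.mkAlgHom Rq (QMRel Rq (T 1) (T (-1))) (ι Rq i) * 1 ∈ Smod :=
      genmul_mem i 1 one_mem_S
    simpa using this
  | mul x y ihx ihy =>
    rw [map_mul]
    exact mul_mem_S _ ihx _ ihy
  | add x y ihx ihy => rw [map_add]; exact Smod.add_mem ihx ihy

-- Representation for linear independence
abbrev Vmod : Type := (ℕ × ℕ × ℕ × ℕ) →₀ Rq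

def Si (i : ℕ) : Rq := ∑ m ∈ Finset.range i, (T (-1) : Rq) ^ (2*m)

def opA : Vmod →ₗ[Rq] Vmod := Finsupp.lmapDomain Rq Rq (fun p => (p.1 + 1, p.2))
def opB : Vmod →ₗ[Rq] Vmod := Finsupp.lsum ℕ fun p =>
  ((T (-1) : Rq) ^ p.1) • Finsupp.lsingle (p.1, p.2.1 + 1, p.2.2)
def opC : Vmod →ₗ[Rq] Vmod := Finsupp.lsum ℕ fun p =>
  ((T (-1) : Rq) ^ p.1) • Finsupp.lsingle (p.1, p.2.1, p.2.2.1 + 1, p.2.2.2)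
def opD : Vmod →ₗ[Rq] Vmod := Finsupp.lsum ℕ fun p =>
  ((T (-1) : Rq) ^ (p.2.1 + p.2.2.1)) • Finsupp.lsingle (p.1, p.2.1, p.2.2.1, p.2.2.2 + 1)
  - (((T 1 : Rq) - T (-1)) * Si p.1) • Finsupp.lsingle (p.1 - 1, p.2.1 + 1, p.2.2.1 + 1, p.2.2.2)

lemma opA_single (p : ℕ × ℕ × ℕ × ℕ) (r : Rq) :
    opA (Finsupp.single p r) = Finsupp.single (p.1 + 1, p.2) r := by
  simp [opA, Finsupp.lmapDomain_apply, Finsupp.mapDomain_single]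

lemma opB_single (p : ℕ × ℕ × ℕ × ℕ) (r : Rq) :
    opB (Finsupp.single p r) = Finsupp.single (p.1, p.2.1 + 1, p.2.2) ((T (-1))^p.1 * r) := by
  simp [opB, Finsupp.lsum_single, Finsupp.smul_single]

lemma opC_single (p : ℕ × ℕ × ℕ × ℕ) (r : Rq) :
    opC (Finsupp.single p r)
      = Finsupp.single (p.1, p.2.1, p.2.2.1 + 1, p.2.2.2) ((T (-1))^p.1 * r) := by
  simp [opC, Finsupp.lsum_single, Finsupp.smul_single]

lemma opD_single (p : ℕ × ℕ × ℕ × ℕ) (r : Rq) :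
    opD (Finsupp.single p r)
      = Finsupp.single (p.1, p.2.1, p.2.2.1, p.2.2.2 + 1) ((T (-1))^(p.2.1 + p.2.2.1) * r)
      - Finsupp.single (p.1 - 1, p.2.1 + 1, p.2.2.1 + 1, p.2.2.2) ((T 1 - T (-1)) * Si p.1 * r) := by
  simp [opD, Finsupp.lsum_single, Finsupp.smul_single]

lemma Si_succ (i : ℕ) : Si (i + 1) = Si i + (T (-1) : Rq) ^ (2*i) :=
  Finset.sum_range_succ _ _

lemma Si_zero : Si 0 = 0 := rfl

lemma R1 : opA * opB = (T 1 : Rq) • (opB * opA) := by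
  refine Finsupp.lhom_ext fun p r => ?_
  obtain ⟨i, j, k, l⟩ := p
  simp only [Module.End.mul_apply, LinearMap.smul_apply, opA_single, opB_single,
    Finsupp.smul_single, smul_eq_mul]
  congr 1
  linear_combination (-((T (-1) : Rq) ^ i * r)) * hqqi

lemma R2 : opA * opC = (T 1 : Rq) • (opC * opA) := by
  refine Finsupp.lhom_ext fun p r => ?_
  obtain ⟨i, j, k, l⟩ := p
  simp only [Module.End.mul_apply, LinearMap.smul_apply, opA_single, opC_single,
    Finsupp.smul_single, smul_eq_mul]
  congr 1
  linear_combination (-((T (-1) : Rq) ^ i * r)) * hqqi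

lemma R5 : opB * opC = opC * opB := by
  refine Finsupp.lhom_ext fun p r => ?_
  obtain ⟨i, j, k, l⟩ := p
  simp only [Module.End.mul_apply, opB_single, opC_single]

lemma R3 : opB * opD = (T 1 : Rq) • (opD * opB) := by
  refine Finsupp.lhom_ext fun p r => ?_
  obtain ⟨i, j, k, l⟩ := p
  cases i with
  | zero =>
    simp only [Module.End.mul_apply, LinearMap.smul_apply, opB_single, opD_single, map_sub,
      Si_zero, mul_zero, zero_mul, Finsupp.single_zero, sub_zero, Finsupp.smul_single,
      smul_eq_mul]
    congr 1
    linear_combination (-((T (-1) : Rq) ^ (j + k) * r)) * hqqi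
  | succ n =>
    simp only [Module.End.mul_apply, LinearMap.smul_apply, opB_single, opD_single, map_sub,
      Nat.add_sub_cancel, Finsupp.smul_single, smul_eq_mul, smul_sub]
    congr 1
    · congr 1
      linear_combination (-((T (-1) : Rq) ^ (n + 1 + j + k) * r)) * hqqi
    · congr 1
      linear_combination (-(((T 1 : Rq) - T (-1)) * Si (n + 1) * r * (T (-1) : Rq) ^ n)) * hqqi

lemma R4 : opC * opD = (T 1 : Rq) • (opD * opC) := by
  refine Finsupp.lhom_ext fun p r => ?_
  obtain ⟨i, j, k, l⟩ := p
  cases i with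
  | zero =>
    simp only [Module.End.mul_apply, LinearMap.smul_apply, opC_single, opD_single, map_sub,
      Si_zero, mul_zero, zero_mul, Finsupp.single_zero, sub_zero, Finsupp.smul_single,
      smul_eq_mul]
    congr 1
    linear_combination (-((T (-1) : Rq) ^ (j + k) * r)) * hqqi
  | succ n =>
    simp only [Module.End.mul_apply, LinearMap.smul_apply, opC_single, opD_single, map_sub,
      Nat.add_sub_cancel, Finsupp.smul_single, smul_eq_mul, smul_sub]
    congr 1
    · congr 1
      linear_combination (-((T (-1) : Rq) ^ (n + 1 + j + k) * r)) * hqqi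
    · congr 1
      linear_combination (-(((T 1 : Rq) - T (-1)) * Si (n + 1) * r * (T (-1) : Rq) ^ n)) * hqqi

lemma R6 : opA * opD = opD * opA + ((T 1 : Rq) - T (-1)) • (opB * opC) := by
  refine Finsupp.lhom_ext fun p r => ?_
  obtain ⟨i, j, k, l⟩ := p
  cases i with
  | zero =>
    simp only [Module.End.mul_apply, LinearMap.add_apply, LinearMap.smul_apply, opA_single,
      opB_single, opC_single, opD_single, map_sub, Si_zero, Si_succ, mul_zero, zero_mul,
      Finsupp.single_zero, sub_zero, Finsupp.smul_single, smul_eq_mul, zero_add, pow_zero,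
      one_mul, mul_one, Nat.sub_self]
    abel
  | succ n =>
    simp only [Module.End.mul_apply, LinearMap.add_apply, LinearMap.smul_apply, opA_single,
      opB_single, opC_single, opD_single, map_sub, Nat.add_sub_cancel, Finsupp.smul_single,
      smul_eq_mul]
    have hmerge : Finsupp.single ((n+1 : ℕ), (j+1 : ℕ), (k+1 : ℕ), l)
        (((T 1 : Rq) - T (-1)) * Si (n + 1 + 1) * r)
        = Finsupp.single ((n+1 : ℕ), (j+1 : ℕ), (k+1 : ℕ), l)
            (((T 1 : Rq) - T (-1)) * Si (n + 1) * r)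
          + Finsupp.single ((n+1 : ℕ), (j+1 : ℕ), (k+1 : ℕ), l)
            (((T 1 : Rq) - T (-1)) * ((T (-1) : Rq) ^ (n+1) * ((T (-1) : Rq) ^ (n+1) * r))) := by
      rw [← Finsupp.single_add]
      congr 1
      rw [Si_succ (n + 1), pow_add]
      ring
    rw [hmerge]
    abel

def fgen : Fin 4 → Module.End Rq Vmod := ![opA, opB, opC, opD]

def rho0 : FreeAlgebra Rq (Fin 4) →ₐ[Rq] Module.End Rq Vmod :=
  FreeAlgebra.lift Rq fgen

lemma rho0_rel : ∀ ⦃x y⦄, QMRel Rq (T 1) (T (-1)) x y → rho0 x = rho0 y := by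
  intro x y h
  cases h <;>
    simp only [rho0, map_mul, map_smul, map_add, FreeAlgebra.lift_ι_apply, fgen,
      Matrix.cons_val_zero, Matrix.cons_val_one, Matrix.head_cons, Matrix.cons_val_two,
      Matrix.cons_val_three, Matrix.tail_cons]
  exacts [R1, R2, R3, R4, R5, by rw [R6]]

def rho : OqM2 →ₐ[Rq] Module.End Rq Vmod :=
  RingQuot.liftAlgHom Rq ⟨rho0, rho0_rel⟩

lemma rho_gen (i : Fin 4) : rho (gen Rq (T 1) (T (-1)) i) = fgen i := by
  rw [gen, rho, RingQuot.liftAlgHom_mkAlgHom_apply, rho0, FreeAlgebra.lift_ι_apply]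

lemma hDpow (l : ℕ) :
    (opD ^ l) (Finsupp.single ((0:ℕ),(0:ℕ),(0:ℕ),(0:ℕ)) (1:Rq)) = Finsupp.single (0,0,0,l) 1 := by
  induction l with
  | zero => simp
  | succ n ih =>
    rw [pow_succ', Module.End.mul_apply, ih, opD_single]
    simp [Si_zero]

lemma hCpow (k l : ℕ) :
    (opC ^ k) (Finsupp.single ((0:ℕ),(0:ℕ),(0:ℕ),l) (1:Rq)) = Finsupp.single (0,0,k,l) 1 := by
  induction k with
  | zero => simp
  | succ n ih =>
    rw [pow_succ', Module.End.mul_apply, ih, opC_single]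
    simp

lemma hBpow (j k l : ℕ) :
    (opB ^ j) (Finsupp.single ((0:ℕ),(0:ℕ),k,l) (1:Rq)) = Finsupp.single (0,j,k,l) 1 := by
  induction j with
  | zero => simp
  | succ n ih =>
    rw [pow_succ', Module.End.mul_apply, ih, opB_single]
    simp

lemma hApow (i j k l : ℕ) :
    (opA ^ i) (Finsupp.single ((0:ℕ),j,k,l) (1:Rq)) = Finsupp.single (i,j,k,l) 1 := by
  induction i with
  | zero => simp
  | succ n ih =>
    rw [pow_succ', Module.End.mul_apply, ih, opA_single]

lemma phi_mono (p : ℕ × ℕ × ℕ × ℕ) :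
    rho (mono p) (Finsupp.single ((0:ℕ),(0:ℕ),(0:ℕ),(0:ℕ)) (1:Rq)) = Finsupp.single p 1 := by
  obtain ⟨i, j, k, l⟩ := p
  show rho (aq ^ i * bq ^ j * cq ^ k * dq ^ l) _ = _
  rw [map_mul, map_mul, map_mul, map_pow, map_pow, map_pow, map_pow]
  rw [show aq = gen Rq (T 1) (T (-1)) 0 from rfl]
  rw [rho_gen 0, rho_gen 1, rho_gen 2, rho_gen 3]
  rw [Module.End.mul_apply, Module.End.mul_apply, Module.End.mul_apply]
  show (fgen 0 ^ i) ((fgen 1 ^ j) ((fgen 2 ^ k) ((fgen 3 ^ l) _))) = _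
  rw [show fgen 3 = opD from rfl, show fgen 2 = opC from rfl, show fgen 1 = opB from rfl,
    show fgen 0 = opA from rfl, hDpow, hCpow, hBpow, hApow]

def phi : OqM2 →ₗ[Rq] Vmod where
  toFun x := rho x (Finsupp.single ((0:ℕ),(0:ℕ),(0:ℕ),(0:ℕ)) (1:Rq))
  map_add' x y := by simp only [map_add, LinearMap.add_apply]
  map_smul' r x := by simp only [map_smul, LinearMap.smul_apply, RingHom.id_apply]

lemma mono_li : LinearIndependent Rq mono := by
  have h1 : LinearIndependent Rq (fun p : ℕ×ℕ×ℕ×ℕ => Finsupp.single p (1:Rq)) := by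
    simpa [Finsupp.coe_basisSingleOne] using
      (Finsupp.basisSingleOne : Module.Basis (ℕ×ℕ×ℕ×ℕ) Rq Vmod).linearIndependent
  refine LinearIndependent.of_comp phi ?_
  have : phi ∘ mono = fun p => Finsupp.single p (1:Rq) := funext fun p => phi_mono p
  rw [this]; exact h1


end Aux

/-- The ordered monomials `a^i b^j c^k d^l` form a `ℤ[q,q⁻¹]`-basis of
`O_q(M_2)`: they are linearly independent and they span. -/
theorem orderedMonomials_basis :
    LinearIndependent Rq mono ∧
    Submodule.span Rq (Set.range mono) = (⊤ : Submodule Rq OqM2) := by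
  exact ⟨mono_li, span_top⟩
end
end

section
/- Let ε be a primitive ℓ-th root of unity with ℓ odd, in O_ε(M_2) (the specialisation of O_q(M_2) at q=ε over ℤ_ε = ℤ[q,q⁻¹]/(Φ_ℓ(q))). Then the ℓ-th powers a^ℓ, b^ℓ, c^ℓ, d^ℓ are central in O_ε(M_2). -/
open LaurentPolynomial FreeAlgebra

noncomputable section

/-- `ℤ_ε = ℤ[q,q⁻¹]/(Φ_ℓ(q))`. -/
abbrev Zeps (l : ℕ) : Type :=
  Rq ⧸ Ideal.span {Polynomial.aeval (T 1 : Rq) (Polynomial.cyclotomic l ℤ)}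

/-- `ε`, the image of `q` in `ℤ_ε`: a (formal) primitive `ℓ`-th root of unity. -/
abbrev eps (l : ℕ) : Zeps l := Ideal.Quotient.mk _ (T 1)
/-- `ε⁻¹`, the image of `q⁻¹` in `ℤ_ε`. -/
abbrev epsInv (l : ℕ) : Zeps l := Ideal.Quotient.mk _ (T (-1))

/-- `O_ε(M_2)`, the specialisation of the quantum matrix algebra at `q = ε`. -/
abbrev OE (l : ℕ) : Type := QM (Zeps l) (eps l) (epsInv l)
abbrev aE (l : ℕ) : OE l := gen _ _ _ 0
abbrev bE (l : ℕ) : OE l := gen _ _ _ 1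
abbrev cE (l : ℕ) : OE l := gen _ _ _ 2
abbrev dE (l : ℕ) : OE l := gen _ _ _ 3

set_option synthInstance.maxHeartbeats 1000000
set_option maxHeartbeats 1000000

section Aux

variable {k : Type} [CommRing k] {A : Type} [Ring A] [Algebra k A]

lemma pow_right_qcomm {x y u : A} (hu : ∀ z : A, Commute u z)
    (h : x * y = u * (y * x)) (n : ℕ) : x * y ^ n = u ^ n * (y ^ n * x) := by
  induction n with
  | zero => simp
  | succ n ih =>
    have hy : y * (u ^ n * (y ^ n * x)) = u ^ n * (y ^ (n + 1) * x) := by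
      rw [← mul_assoc, ((hu y).pow_left n).symm.eq, mul_assoc, ← mul_assoc y,
        ← pow_succ']
    calc x * y ^ (n + 1) = (x * y) * y ^ n := by rw [pow_succ', ← mul_assoc]
      _ = u * (y * (x * y ^ n)) := by rw [h, mul_assoc, mul_assoc]
      _ = u * (u ^ n * (y ^ (n + 1) * x)) := by rw [ih, hy]
      _ = u ^ (n + 1) * (y ^ (n + 1) * x) := by rw [← mul_assoc, ← pow_succ']

lemma pow_left_qcomm {x y u : A} (hu : ∀ z : A, Commute u z)
    (h : x * y = u * (y * x)) (n : ℕ) : x ^ n * y = u ^ n * (y * x ^ n) := by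
  induction n with
  | zero => simp
  | succ n ih =>
    have hx : x ^ n * (u * (y * x)) = u * ((x ^ n * y) * x) := by
      rw [← mul_assoc, ← (hu (x ^ n)).eq, mul_assoc, mul_assoc]
    calc x ^ (n + 1) * y = x ^ n * (x * y) := by rw [pow_succ, mul_assoc]
      _ = u * ((x ^ n * y) * x) := by rw [h, hx]
      _ = u * ((u ^ n * (y * x ^ n)) * x) := by rw [ih]
      _ = u ^ (n + 1) * (y * x ^ (n + 1)) := by
          rw [mul_assoc (u ^ n), mul_assoc y, ← pow_succ, ← mul_assoc, ← pow_succ']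

lemma pow_ad_identity {a b c d R S : A} (hR : ∀ z : A, Commute R z)
    (hS : ∀ z : A, Commute S z)
    (had : a * d = d * a + R * (b * c)) (habc : a * (b * c) = S * (b * c * a)) (n : ℕ) :
    a ^ (n + 1) * d = d * a ^ (n + 1)
      + (R * ∑ i ∈ Finset.range (n + 1), S ^ i) * (b * c * a ^ n) := by
  induction n with
  | zero => simpa using had
  | succ n ih =>
    have hC : ∀ z : A, Commute (R * ∑ i ∈ Finset.range (n + 1), S ^ i) z := by
      intro z
      exact (hR z).mul_left (Commute.sum_left _ _ _ fun i _ => (hS z).pow_left i)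
    have step : a * (b * c * a ^ n) = S * (b * c * a ^ (n + 1)) := by
      rw [← mul_assoc, habc, mul_assoc, mul_assoc (b * c), ← pow_succ']
    have hsum : (∑ i ∈ Finset.range (n + 1), S ^ i) * S
        = S * ∑ i ∈ Finset.range (n + 1), S ^ i :=
      (Commute.sum_left _ _ _ fun i _ => (Commute.refl S).pow_left i).eq
    have hco : R + R * (∑ i ∈ Finset.range (n + 1), S ^ i) * S
        = R * ∑ i ∈ Finset.range (n + 2), S ^ i := by
      rw [geom_sum_succ (n := n + 1), mul_add, mul_one, mul_assoc, hsum, add_comm]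
    have hmv : a * ((R * ∑ i ∈ Finset.range (n + 1), S ^ i) * (b * c * a ^ n))
        = (R * ∑ i ∈ Finset.range (n + 1), S ^ i) * (a * (b * c * a ^ n)) := by
      rw [← mul_assoc, ← (hC a).eq, mul_assoc]
    have h1 : a * (d * a ^ (n + 1)) = d * a ^ (n + 2) + R * (b * c * a ^ (n + 1)) := by
      rw [← mul_assoc, had, add_mul, mul_assoc d, ← pow_succ', mul_assoc R]
    have h2 : (R * ∑ i ∈ Finset.range (n + 1), S ^ i) * (a * (b * c * a ^ n))
        = (R * (∑ i ∈ Finset.range (n + 1), S ^ i) * S) * (b * c * a ^ (n + 1)) := by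
      rw [step, ← mul_assoc]
    calc a ^ (n + 2) * d = a * (a ^ (n + 1) * d) := by
          rw [← mul_assoc, ← pow_succ']
      _ = a * (d * a ^ (n + 1))
          + (R * ∑ i ∈ Finset.range (n + 1), S ^ i) * (a * (b * c * a ^ n)) := by
          rw [ih, mul_add, hmv]
      _ = d * a ^ (n + 2) + R * (b * c * a ^ (n + 1))
          + (R * (∑ i ∈ Finset.range (n + 1), S ^ i) * S) * (b * c * a ^ (n + 1)) := by
          rw [h1, h2]
      _ = d * a ^ (n + 2)
          + (R * ∑ i ∈ Finset.range (n + 2), S ^ i) * (b * c * a ^ (n + 1)) := by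
          rw [add_assoc, ← add_mul, hco]

end Aux

/-- An element commuting with all four generators is central. -/
lemma commute_of_gens {k : Type} [CommRing k] {q qi : k} {z : QM k q qi}
    (h : ∀ i, Commute z (gen k q qi i)) (x : QM k q qi) : Commute z x := by
  obtain ⟨y, rfl⟩ := RingQuot.mkAlgHom_surjective k (QMRel k q qi) x
  induction y using FreeAlgebra.induction with
  | grade0 r =>
      rw [AlgHom.commutes]
      exact (Algebra.commutes r z).symm
  | grade1 i => exact h i
  | mul u v hu hv => rw [map_mul]; exact hu.mul_right hv
  | add u v hu hv => rw [map_add]; exact hu.add_right hv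

section Rels

variable (l : ℕ)

local notation "e" => eps l
local notation "ei" => epsInv l
local notation "Am" => algebraMap (Zeps l) (OE l)

lemma eps_mul_epsInv : e * ei = 1 := by
  rw [← map_mul, ← T_add]
  norm_num

lemma eps_pow_l : e ^ l = 1 := by
  have h2 : (Polynomial.aeval (T 1 : Rq)) (Polynomial.cyclotomic l ℤ) ∣
      (T 1 : Rq) ^ l - 1 := by
    have := map_dvd (Polynomial.aeval (T 1 : Rq))
      (Polynomial.cyclotomic.dvd_X_pow_sub_one l ℤ)
    simpa using this
  have h3 : e ^ l - 1 = 0 := by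
    rw [← map_pow, ← map_one (Ideal.Quotient.mk _), ← map_sub,
      Ideal.Quotient.eq_zero_iff_mem, Ideal.mem_span_singleton]
    exact h2
  exact sub_eq_zero.mp h3

lemma epsInv_pow_l : ei ^ l = 1 := by
  have h : (e * ei) ^ l = 1 := by rw [eps_mul_epsInv, one_pow]
  rwa [mul_pow, eps_pow_l, one_mul] at h

lemma smul_eq_here (r : Zeps l) (x y : FreeAlgebra (Zeps l) (Fin 4))
    (h : x = r • y) :
    RingQuot.mkAlgHom (Zeps l) (QMRel (Zeps l) e ei) x
      = Am r * RingQuot.mkAlgHom (Zeps l) (QMRel (Zeps l) e ei) y := by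
  have hy : x = algebraMap (Zeps l) (FreeAlgebra (Zeps l) (Fin 4)) r * y := by
    rw [h]; exact Algebra.smul_def r y
  rw [hy, map_mul, AlgHom.commutes]

lemma rel_ab_s5 : aE l * bE l = Am e * (bE l * aE l) := by
  have h := RingQuot.mkAlgHom_rel (Zeps l) (QMRel.ab (k := Zeps l) (q := e) (qi := ei))
  rw [smul_eq_here l e _ _ rfl] at h
  simp only [map_mul] at h
  exact h

lemma rel_ac_s5 : aE l * cE l = Am e * (cE l * aE l) := by
  have h := RingQuot.mkAlgHom_rel (Zeps l) (QMRel.ac (k := Zeps l) (q := e) (qi := ei))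
  rw [smul_eq_here l e _ _ rfl] at h
  simp only [map_mul] at h
  exact h

lemma rel_bd_s5 : bE l * dE l = Am e * (dE l * bE l) := by
  have h := RingQuot.mkAlgHom_rel (Zeps l) (QMRel.bd (k := Zeps l) (q := e) (qi := ei))
  rw [smul_eq_here l e _ _ rfl] at h
  simp only [map_mul] at h
  exact h

lemma rel_cd_s5 : cE l * dE l = Am e * (dE l * cE l) := by
  have h := RingQuot.mkAlgHom_rel (Zeps l) (QMRel.cd (k := Zeps l) (q := e) (qi := ei))
  rw [smul_eq_here l e _ _ rfl] at h
  simp only [map_mul] at h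
  exact h

lemma rel_bc_s5 : bE l * cE l = cE l * bE l := by
  have h := RingQuot.mkAlgHom_rel (Zeps l) (QMRel.bc (k := Zeps l) (q := e) (qi := ei))
  simp only [map_mul] at h
  exact h

lemma rel_ad_s5 : aE l * dE l = dE l * aE l + Am (e - ei) * (bE l * cE l) := by
  have h := RingQuot.mkAlgHom_rel (Zeps l) (QMRel.ad (k := Zeps l) (q := e) (qi := ei))
  rw [map_add, smul_eq_here l (e - ei) _ _ rfl] at h
  simp only [map_mul] at h
  exact h

lemma rel_db_s5 : dE l * bE l = Am ei * (bE l * dE l) := by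
  have h : Am ei * (bE l * dE l) = (Am ei * Am e) * (dE l * bE l) := by
    rw [rel_bd_s5, ← mul_assoc]
  rw [h, ← map_mul, mul_comm (epsInv l) (eps l), eps_mul_epsInv, map_one, one_mul]

lemma rel_dc_s5 : dE l * cE l = Am ei * (cE l * dE l) := by
  have h : Am ei * (cE l * dE l) = (Am ei * Am e) * (dE l * cE l) := by
    rw [rel_cd_s5, ← mul_assoc]
  rw [h, ← map_mul, mul_comm (epsInv l) (eps l), eps_mul_epsInv, map_one, one_mul]

lemma rel_da_s5 : dE l * aE l = aE l * dE l + Am (ei - e) * (bE l * cE l) := by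
  have h0 : (e - ei) + (ei - e) = 0 := by ring
  rw [rel_ad_s5, add_assoc, ← add_mul, ← map_add, h0, map_zero, zero_mul, add_zero]

lemma habc : aE l * (bE l * cE l) = Am (e * e) * (bE l * cE l * aE l) := by
  have hb : bE l * (Am e * (cE l * aE l)) = Am e * (bE l * (cE l * aE l)) := by
    rw [← mul_assoc, ← (Algebra.commutes e (bE l) : _), mul_assoc]
  rw [← mul_assoc, rel_ab_s5, mul_assoc, mul_assoc (bE l), rel_ac_s5, hb, ← mul_assoc,
    ← map_mul, mul_assoc (bE l), ← mul_assoc (bE l)]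

lemma hdbc : dE l * (bE l * cE l) = Am (ei * ei) * (bE l * cE l * dE l) := by
  have hb : bE l * (Am ei * (cE l * dE l)) = Am ei * (bE l * (cE l * dE l)) := by
    rw [← mul_assoc, ← (Algebra.commutes ei (bE l) : _), mul_assoc]
  rw [← mul_assoc, rel_db_s5, mul_assoc, mul_assoc (bE l), rel_dc_s5, hb, ← mul_assoc,
    ← map_mul, mul_assoc (bE l), ← mul_assoc (bE l)]

lemma hvan1 : (e - ei) * ∑ i ∈ Finset.range l, (e * e) ^ i = 0 := by
  have h := eps_mul_epsInv l
  have hx : (e * e) ^ l = 1 := by rw [mul_pow, eps_pow_l, one_mul]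
  have hg : (∑ i ∈ Finset.range l, (e * e) ^ i) * (e * e - 1) = 0 := by
    rw [geom_sum_mul, hx, sub_self]
  linear_combination ei * hg - e * (∑ i ∈ Finset.range l, (e * e) ^ i) * h

lemma hvan2 : (ei - e) * ∑ i ∈ Finset.range l, (ei * ei) ^ i = 0 := by
  have h : ei * e = 1 := by rw [mul_comm]; exact eps_mul_epsInv l
  have hx : (ei * ei) ^ l = 1 := by rw [mul_pow, epsInv_pow_l, one_mul]
  have hg : (∑ i ∈ Finset.range l, (ei * ei) ^ i) * (ei * ei - 1) = 0 := by
    rw [geom_sum_mul, hx, sub_self]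
  linear_combination e * hg - ei * (∑ i ∈ Finset.range l, (ei * ei) ^ i) * h

end Rels

/-- For `ℓ` odd, the `ℓ`-th powers `a^ℓ, b^ℓ, c^ℓ, d^ℓ` are central
in `O_ε(M_2)`. -/
theorem lth_powers_central (l : ℕ) (hpos : 0 < l) (hodd : Odd l) :
    ∀ x : OE l, Commute (aE l ^ l) x ∧ Commute (bE l ^ l) x ∧
      Commute (cE l ^ l) x ∧ Commute (dE l ^ l) x := by
  obtain ⟨n, rfl⟩ : ∃ n, l = n + 1 := ⟨l - 1, (Nat.succ_pred_eq_of_pos hpos).symm⟩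
  set Am := algebraMap (Zeps (n + 1)) (OE (n + 1)) with hAm
  have hcome : ∀ z : OE (n + 1), Commute (Am (eps (n + 1))) z := fun z =>
    Algebra.commutes _ z
  have hcomr : ∀ z : OE (n + 1), Commute (Am (eps (n + 1) - epsInv (n + 1))) z :=
    fun z => Algebra.commutes _ z
  have hcomr' : ∀ z : OE (n + 1), Commute (Am (epsInv (n + 1) - eps (n + 1))) z :=
    fun z => Algebra.commutes _ z
  have hcoms : ∀ z : OE (n + 1), Commute (Am (eps (n + 1) * eps (n + 1))) z :=
    fun z => Algebra.commutes _ z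
  have hcoms' : ∀ z : OE (n + 1), Commute (Am (epsInv (n + 1) * epsInv (n + 1))) z :=
    fun z => Algebra.commutes _ z
  have hel : Am (eps (n + 1)) ^ (n + 1) = 1 := by
    rw [← map_pow, eps_pow_l, map_one]
  -- coefficient vanishing, transported to OE
  have hsum1 : ∑ i ∈ Finset.range (n + 1), Am (eps (n + 1) * eps (n + 1)) ^ i
      = Am (∑ i ∈ Finset.range (n + 1), (eps (n + 1) * eps (n + 1)) ^ i) := by
    rw [map_sum]
    exact Finset.sum_congr rfl fun i _ => (map_pow _ _ _).symm
  have hsum2 : ∑ i ∈ Finset.range (n + 1), Am (epsInv (n + 1) * epsInv (n + 1)) ^ i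
      = Am (∑ i ∈ Finset.range (n + 1), (epsInv (n + 1) * epsInv (n + 1)) ^ i) := by
    rw [map_sum]
    exact Finset.sum_congr rfl fun i _ => (map_pow _ _ _).symm
  have hco1 : Am (eps (n + 1) - epsInv (n + 1))
      * ∑ i ∈ Finset.range (n + 1), Am (eps (n + 1) * eps (n + 1)) ^ i = 0 := by
    rw [hsum1, ← map_mul, hvan1 (n + 1), map_zero]
  have hco2 : Am (epsInv (n + 1) - eps (n + 1))
      * ∑ i ∈ Finset.range (n + 1), Am (epsInv (n + 1) * epsInv (n + 1)) ^ i = 0 := by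
    rw [hsum2, ← map_mul, hvan2 (n + 1), map_zero]
  -- a^l commutes with the generators
  have haa : Commute (aE (n + 1) ^ (n + 1)) (aE (n + 1)) :=
    (Commute.refl (aE (n + 1))).pow_left (n + 1)
  have hab : Commute (aE (n + 1) ^ (n + 1)) (bE (n + 1)) := by
    show aE (n + 1) ^ (n + 1) * bE (n + 1) = bE (n + 1) * aE (n + 1) ^ (n + 1)
    rw [pow_left_qcomm hcome (rel_ab_s5 (n + 1)) (n + 1), hel, one_mul]
  have hac : Commute (aE (n + 1) ^ (n + 1)) (cE (n + 1)) := by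
    show aE (n + 1) ^ (n + 1) * cE (n + 1) = cE (n + 1) * aE (n + 1) ^ (n + 1)
    rw [pow_left_qcomm hcome (rel_ac_s5 (n + 1)) (n + 1), hel, one_mul]
  have had : Commute (aE (n + 1) ^ (n + 1)) (dE (n + 1)) := by
    have key := pow_ad_identity hcomr hcoms (rel_ad_s5 (n + 1)) (habc (n + 1)) n
    rw [hco1, zero_mul, add_zero] at key
    exact key
  -- b^l commutes with the generators
  have hba : Commute (bE (n + 1) ^ (n + 1)) (aE (n + 1)) := by
    have h : aE (n + 1) * bE (n + 1) ^ (n + 1)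
        = bE (n + 1) ^ (n + 1) * aE (n + 1) := by
      rw [pow_right_qcomm hcome (rel_ab_s5 (n + 1)) (n + 1), hel, one_mul]
    exact Commute.symm h
  have hbb : Commute (bE (n + 1) ^ (n + 1)) (bE (n + 1)) :=
    (Commute.refl (bE (n + 1))).pow_left (n + 1)
  have hbc : Commute (bE (n + 1) ^ (n + 1)) (cE (n + 1)) :=
    Commute.pow_left (rel_bc_s5 (n + 1)) (n + 1)
  have hbd : Commute (bE (n + 1) ^ (n + 1)) (dE (n + 1)) := by
    show bE (n + 1) ^ (n + 1) * dE (n + 1) = dE (n + 1) * bE (n + 1) ^ (n + 1)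
    rw [pow_left_qcomm hcome (rel_bd_s5 (n + 1)) (n + 1), hel, one_mul]
  -- c^l commutes with the generators
  have hca : Commute (cE (n + 1) ^ (n + 1)) (aE (n + 1)) := by
    have h : aE (n + 1) * cE (n + 1) ^ (n + 1)
        = cE (n + 1) ^ (n + 1) * aE (n + 1) := by
      rw [pow_right_qcomm hcome (rel_ac_s5 (n + 1)) (n + 1), hel, one_mul]
    exact Commute.symm h
  have hcb : Commute (cE (n + 1) ^ (n + 1)) (bE (n + 1)) :=
    Commute.pow_left (Commute.symm (rel_bc_s5 (n + 1))) (n + 1)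
  have hcc : Commute (cE (n + 1) ^ (n + 1)) (cE (n + 1)) :=
    (Commute.refl (cE (n + 1))).pow_left (n + 1)
  have hcd : Commute (cE (n + 1) ^ (n + 1)) (dE (n + 1)) := by
    show cE (n + 1) ^ (n + 1) * dE (n + 1) = dE (n + 1) * cE (n + 1) ^ (n + 1)
    rw [pow_left_qcomm hcome (rel_cd_s5 (n + 1)) (n + 1), hel, one_mul]
  -- d^l commutes with the generators
  have hda : Commute (dE (n + 1) ^ (n + 1)) (aE (n + 1)) := by
    have key := pow_ad_identity hcomr' hcoms' (rel_da_s5 (n + 1)) (hdbc (n + 1)) n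
    rw [hco2, zero_mul, add_zero] at key
    exact key
  have hdb : Commute (dE (n + 1) ^ (n + 1)) (bE (n + 1)) := by
    have h : bE (n + 1) * dE (n + 1) ^ (n + 1)
        = dE (n + 1) ^ (n + 1) * bE (n + 1) := by
      rw [pow_right_qcomm hcome (rel_bd_s5 (n + 1)) (n + 1), hel, one_mul]
    exact Commute.symm h
  have hdc : Commute (dE (n + 1) ^ (n + 1)) (cE (n + 1)) := by
    have h : cE (n + 1) * dE (n + 1) ^ (n + 1)
        = dE (n + 1) ^ (n + 1) * cE (n + 1) := by
      rw [pow_right_qcomm hcome (rel_cd_s5 (n + 1)) (n + 1), hel, one_mul]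
    exact Commute.symm h
  have hdd : Commute (dE (n + 1) ^ (n + 1)) (dE (n + 1)) :=
    (Commute.refl (dE (n + 1))).pow_left (n + 1)
  intro x
  refine ⟨commute_of_gens ?_ x, commute_of_gens ?_ x, commute_of_gens ?_ x,
    commute_of_gens ?_ x⟩ <;> intro i <;> fin_cases i
  · exact haa
  · exact hab
  · exact hac
  · exact had
  · exact hba
  · exact hbb
  · exact hbc
  · exact hbd
  · exact hca
  · exact hcb
  · exact hcc
  · exact hcd
  · exact hda
  · exact hdb
  · exact hdc
  · exact hdd
end
end

section
/- Let ε be a primitive ℓ-th root of unity with ℓ odd. In O_ε(M_2), D_ε^ℓ = a^ℓ d^ℓ − b^ℓ c^ℓ, where D_ε = ad − ε bc is the quantum determinant at q=ε. -/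
open LaurentPolynomial FreeAlgebra

noncomputable section

/-- The quantum determinant of `O_ε(M_2)`, `D_ε = ad - ε·bc`. -/
def DE (l : ℕ) : OE l := aE l * dE l - eps l • (bE l * cE l)

namespace DEProof

open Polynomial



lemma toLaurent_eq_aeval (p : Polynomial ℤ) :
    toLaurent p = Polynomial.aeval (T 1 : Rq) p := by
  have h : (Polynomial.toLaurentAlg : Polynomial ℤ →ₐ[ℤ] Rq) = Polynomial.aeval (T 1 : Rq) :=
    Polynomial.algHom_ext (by simp [Polynomial.toLaurentAlg, Polynomial.toLaurent_X])
  have := congrArg (fun f => (f : Polynomial ℤ →ₐ[ℤ] Rq) p) h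
  simpa only [Polynomial.toLaurentAlg_apply] using this

/-- The ring hom `ℤ[X] → ℤ_ε`, `X ↦ ε`. -/
def phi (l : ℕ) : Polynomial ℤ →+* Zeps l :=
  (Ideal.Quotient.mk _).comp (Polynomial.toLaurent)

lemma phi_apply (l : ℕ) (p : Polynomial ℤ) :
    phi l p = Ideal.Quotient.mk _ (Polynomial.toLaurent p) := rfl

lemma phi_X (l : ℕ) : phi l X = eps l := by
  simp [phi_apply, Polynomial.toLaurent_X]

lemma phi_cyclotomic (l : ℕ) : phi l (cyclotomic l ℤ) = 0 := by
  rw [phi_apply, toLaurent_eq_aeval]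
  exact Ideal.Quotient.eq_zero_iff_mem.2 (Ideal.subset_span rfl)

lemma eps_mul_epsInv (l : ℕ) : eps l * epsInv l = 1 := by
  rw [← map_mul, ← T_add]
  norm_num [T_zero]

lemma eps_pow (l : ℕ) (hpos : 0 < l) : eps l ^ l = 1 := by
  obtain ⟨g, hg⟩ := Polynomial.cyclotomic.dvd_X_pow_sub_one l ℤ
  have := congrArg (phi l) hg
  rw [map_sub, map_pow, map_one, phi_X, map_mul, phi_cyclotomic, zero_mul] at this
  linear_combination this
lemma eps_pow_mod (l : ℕ) (m : ℕ) : eps l ^ m = eps l ^ (m % l) := by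
  rcases Nat.eq_zero_or_pos l with h | h
  · simp [h]
  conv_lhs => rw [← Nat.div_add_mod m l]
  rw [pow_add, pow_mul, eps_pow l h, one_pow, one_mul]

lemma mk_T_nat (l : ℕ) (n : ℕ) : (Ideal.Quotient.mk _ (T (n : ℤ)) : Zeps l) = eps l ^ n := by
  rw [← map_pow, T_pow, mul_one]

lemma phi_surjective (l : ℕ) (hpos : 0 < l) : Function.Surjective (phi l) := by
  intro z
  obtain ⟨f, rfl⟩ := Ideal.Quotient.mk_surjective z
  obtain ⟨n, f', hf'⟩ := f.exists_T_pow
  refine ⟨f' * X ^ ((l - 1) * n), ?_⟩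
  have h1 : phi l f' = Ideal.Quotient.mk _ f * eps l ^ n := by
    rw [phi_apply, hf', map_mul, mk_T_nat]
  have h2 : eps l ^ n * eps l ^ ((l - 1) * n) = 1 := by
    rw [← pow_add, show n + (l-1)*n = l * n by cases l with
      | zero => omega
      | succ m => simp [Nat.succ_sub_one]; ring]
    rw [pow_mul, eps_pow l hpos, one_pow]
  calc phi l (f' * X ^ ((l-1)*n)) = phi l f' * eps l ^ ((l-1)*n) := by
        rw [map_mul, map_pow, phi_X]
      _ = Ideal.Quotient.mk _ f * (eps l ^ n * eps l ^ ((l-1)*n)) := by rw [h1]; ring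
      _ = Ideal.Quotient.mk _ f := by rw [h2, mul_one]

lemma prime_cyclotomic (l : ℕ) (hpos : 0 < l) : Prime (cyclotomic l ℤ) :=
  (UniqueFactorizationMonoid.irreducible_iff_prime).1 (cyclotomic.irreducible hpos)
lemma cyclo_coeff_zero_ne (l : ℕ) (hpos : 0 < l) : (cyclotomic l ℤ).coeff 0 ≠ 0 := by
  rcases eq_or_lt_of_le (show 1 ≤ l from hpos) with h | h
  · rw [← h]
    norm_num [cyclotomic_one]
  · rw [cyclotomic_coeff_zero ℤ h]
    norm_num

lemma not_dvd_X (l : ℕ) (hpos : 0 < l) : ¬ (cyclotomic l ℤ ∣ X) := by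
  intro h
  have hassoc : Associated (cyclotomic l ℤ) (X : Polynomial ℤ) :=
    ((prime_cyclotomic l hpos).irreducible).associated_of_dvd Polynomial.irreducible_X h
  obtain ⟨u, hu⟩ := hassoc
  obtain ⟨r, hr, hCr⟩ := Polynomial.isUnit_iff.1 u.isUnit
  have h0 : ((cyclotomic l ℤ) * u).coeff 0 = (0 : ℤ) := by rw [hu]; simp
  rw [← hCr, Polynomial.coeff_mul_C] at h0
  exact cyclo_coeff_zero_ne l hpos (by
    rcases Int.isUnit_iff.1 hr with rfl | rfl <;> omega)

lemma ker_phi (l : ℕ) (hpos : 0 < l) :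
    RingHom.ker (phi l) = Ideal.span {cyclotomic l ℤ} := by
  apply le_antisymm
  · intro f hf
    rw [RingHom.mem_ker, phi_apply, Ideal.Quotient.eq_zero_iff_mem,
      Ideal.mem_span_singleton'] at hf
    obtain ⟨g, hg⟩ := hf
    obtain ⟨m, g', hg'⟩ := g.exists_T_pow
    have key : toLaurent (g' * cyclotomic l ℤ) = toLaurent (X ^ m * f) := by
      rw [map_mul, map_mul, hg', Polynomial.toLaurent_X_pow,
        ← toLaurent_eq_aeval (cyclotomic l ℤ)] at *
      calc g * T m * toLaurent (cyclotomic l ℤ)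
          = (g * toLaurent (cyclotomic l ℤ)) * T m := by ring
        _ = toLaurent f * T m := by rw [hg]
        _ = T m * toLaurent f := by ring
    have hZX : g' * cyclotomic l ℤ = X ^ m * f := Polynomial.toLaurent_injective key
    have hdvd : cyclotomic l ℤ ∣ X ^ m * f := ⟨g', by rw [← hZX]; ring⟩
    rw [Ideal.mem_span_singleton]
    rcases (prime_cyclotomic l hpos).dvd_or_dvd hdvd with h | h
    · exact absurd ((prime_cyclotomic l hpos).dvd_of_dvd_pow h) (not_dvd_X l hpos)
    · exact h
  · rw [Ideal.span_le]
    intro p hp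
    simp only [Set.mem_singleton_iff] at hp
    subst hp
    exact phi_cyclotomic l

/-- `ℤ_ε` is isomorphic to `ℤ[X]/(Φ_ℓ)`. -/
def zepsEquiv (l : ℕ) (hpos : 0 < l) :
    (Polynomial ℤ ⧸ Ideal.span {cyclotomic l ℤ}) ≃+* Zeps l := by
  rw [← ker_phi l hpos]
  exact RingHom.quotientKerEquivOfSurjective (phi_surjective l hpos)

lemma isDomain_zeps (l : ℕ) (hpos : 0 < l) : IsDomain (Zeps l) := by
  have hprime : (Ideal.span {cyclotomic l ℤ}).IsPrime := by
    rw [Ideal.span_singleton_prime (prime_cyclotomic l hpos).ne_zero]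
    exact prime_cyclotomic l hpos
  exact Function.Injective.isDomain (zepsEquiv l hpos).symm
    (zepsEquiv l hpos).symm.injective

lemma natCast_ne_zero (l : ℕ) (hpos : 0 < l) : (l : Zeps l) ≠ 0 := by
  intro h
  have h2 : phi l (l : Polynomial ℤ) = 0 := by rw [map_natCast, h]
  rw [← RingHom.mem_ker, ker_phi l hpos, Ideal.mem_span_singleton] at h2
  have hC : ((l : ℤ) : Polynomial ℤ) ≠ 0 := by
    simp [Int.natCast_eq_zero]; omega
  have hdeg := Polynomial.natDegree_le_of_dvd h2 (by exact_mod_cast hC)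
  rw [natDegree_cyclotomic] at hdeg
  simp at hdeg
  have := Nat.totient_pos.2 hpos
  omega

lemma isPrimitiveRoot_eps (l : ℕ) (hpos : 0 < l) : IsPrimitiveRoot (eps l) l := by
  haveI := isDomain_zeps l hpos
  haveI : NeZero ((l : ℕ) : Zeps l) := ⟨natCast_ne_zero l hpos⟩
  rw [← Polynomial.isRoot_cyclotomic_iff]
  have : (cyclotomic l (Zeps l)) = Polynomial.map (Int.castRingHom (Zeps l)) (cyclotomic l ℤ) :=
    (map_cyclotomic_int l (Zeps l)).symm
  rw [IsRoot.def, this, Polynomial.eval_map, ← algebraMap_int_eq, ← Polynomial.aeval_def]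
  have hcomm : (Polynomial.aeval (eps l)) (cyclotomic l ℤ)
      = Ideal.Quotient.mkₐ ℤ _ ((Polynomial.aeval (T 1 : Rq)) (cyclotomic l ℤ)) := by
    rw [← Polynomial.aeval_algHom_apply]
    congr 1
  refine hcomm.trans ?_
  rw [Ideal.Quotient.mkₐ_eq_mk]
  exact Ideal.Quotient.eq_zero_iff_mem.2 (Ideal.subset_span rfl)
lemma nthRootsFinset_eq_image {R : Type*} [CommRing R] [IsDomain R] [DecidableEq R]
    {n : ℕ} (hpos : 0 < n) {ζ : R} (h : IsPrimitiveRoot ζ n) :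
    Polynomial.nthRootsFinset n (1 : R) = (Finset.range n).image (ζ ^ ·) := by
  classical
  symm
  apply Finset.eq_of_subset_of_card_le
  · intro x hx
    simp only [Finset.mem_image, Finset.mem_range] at hx
    obtain ⟨j, hj, rfl⟩ := hx
    exact (Polynomial.mem_nthRootsFinset hpos (1 : R)).2
      (by rw [← pow_mul, mul_comm, pow_mul, h.pow_eq_one, one_pow])
  · have hinj : Set.InjOn (ζ ^ ·) (Finset.range n : Set ℕ) := fun i hi j hj hij =>
      h.pow_inj (by simpa using hi) (by simpa using hj) hij
    rw [h.card_nthRootsFinset, Finset.card_image_of_injOn hinj, Finset.card_range]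

lemma prod_nthRoots {R : Type*} [CommRing R] [IsDomain R] [DecidableEq R]
    {n : ℕ} (hpos : 0 < n) {ζ : R} (h : IsPrimitiveRoot ζ n)
    {M : Type*} [CommMonoid M] (f : R → M) :
    ∏ μ ∈ Polynomial.nthRootsFinset n (1 : R), f μ = ∏ j ∈ Finset.range n, f (ζ ^ j) := by
  classical
  rw [nthRootsFinset_eq_image hpos h, Finset.prod_image
    (fun i hi j hj hij => h.pow_inj (by simpa using hi) (by simpa using hj) hij)]

/-- Key commutative identity: over a domain `R` with primitive `n`-th root `ζ`,
in any commutative `R`-algebra, `∏ (u - ζ^j • v) = u^n - v^n`. -/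
lemma key_prod {R : Type*} [CommRing R] [IsDomain R] {n : ℕ} (hpos : 0 < n)
    {ζ : R} (h : IsPrimitiveRoot ζ n) {A : Type*} [CommRing A] [Algebra R A] (u v : A) :
    ∏ j ∈ Finset.range n, (u - ζ ^ j • v) = u ^ n - v ^ n := by
  classical
  have hC : Function.Injective (MvPolynomial.C : R → MvPolynomial (Fin 2) R) :=
    MvPolynomial.C_injective _ _
  have hζD : IsPrimitiveRoot (MvPolynomial.C ζ : MvPolynomial (Fin 2) R) n :=
    h.map_of_injective (f := (MvPolynomial.C : R →+* MvPolynomial (Fin 2) R)) hC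
  have hid : (MvPolynomial.X 0 : MvPolynomial (Fin 2) R) ^ n - (MvPolynomial.X 1) ^ n
      = ∏ j ∈ Finset.range n,
          (MvPolynomial.X 0 - (MvPolynomial.C ζ) ^ j * MvPolynomial.X 1) := by
    rw [IsPrimitiveRoot.pow_sub_pow_eq_prod_sub_mul (x := (MvPolynomial.X 0 : MvPolynomial (Fin 2) R))
      (y := (MvPolynomial.X 1 : MvPolynomial (Fin 2) R)) hpos hζD]
    exact prod_nthRoots hpos hζD _
  have := congrArg (MvPolynomial.aeval (![u, v])) hid
  simp only [map_sub, map_pow, map_prod, map_mul, MvPolynomial.aeval_X,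
    MvPolynomial.aeval_C, Matrix.cons_val_zero, Matrix.cons_val_one, Matrix.head_cons] at this
  calc ∏ j ∈ Finset.range n, (u - ζ ^ j • v)
      = ∏ j ∈ Finset.range n, (u - algebraMap R A ζ ^ j * v) := by
        apply Finset.prod_congr rfl
        intro j _
        rw [Algebra.smul_def, map_pow]
    _ = u ^ n - v ^ n := this.symm
lemma prod_range_zmod (l : ℕ) [NeZero l] {M : Type*} [CommMonoid M] (h : ZMod l → M) :
    ∏ i ∈ Finset.range l, h (i : ZMod l) = ∏ x : ZMod l, h x := by
  apply Finset.prod_bij (fun i _ => ((i : ℕ) : ZMod l))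
  · intros; exact Finset.mem_univ _
  · intro a ha b hb hab
    have := congrArg ZMod.val hab
    rwa [ZMod.val_cast_of_lt (Finset.mem_range.1 ha),
      ZMod.val_cast_of_lt (Finset.mem_range.1 hb)] at this
  · intro b _
    exact ⟨b.val, Finset.mem_range.2 (ZMod.val_lt b), ZMod.natCast_rightInverse b⟩
  · intro a ha; rfl

/-- The bijection `x ↦ 2x + 1` on `ZMod l`, for `l` odd. -/
def two_mul_add_one_equiv (l : ℕ) (hodd : Odd l) : ZMod l ≃ ZMod l := by
  refine ⟨fun x => 2 * x + 1,
    fun y => ((ZMod.unitOfCoprime 2 hodd.coprime_two_left)⁻¹ : (ZMod l)ˣ) * (y - 1), ?_, ?_⟩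
  · intro x
    have h2 : ((ZMod.unitOfCoprime 2 hodd.coprime_two_left : (ZMod l)ˣ) : ZMod l) = 2 :=
      ZMod.coe_unitOfCoprime 2 _
    calc ((ZMod.unitOfCoprime 2 hodd.coprime_two_left)⁻¹ : (ZMod l)ˣ) * (2 * x + 1 - 1)
        = (((ZMod.unitOfCoprime 2 hodd.coprime_two_left)⁻¹ : (ZMod l)ˣ)
            * (ZMod.unitOfCoprime 2 hodd.coprime_two_left : (ZMod l)ˣ)) * x := by
          rw [add_sub_cancel_right, h2]; ring
      _ = x := by rw [← Units.val_mul, inv_mul_cancel]; simp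
  · intro y
    have h2 : ((ZMod.unitOfCoprime 2 hodd.coprime_two_left : (ZMod l)ˣ) : ZMod l) = 2 :=
      ZMod.coe_unitOfCoprime 2 _
    calc 2 * (((ZMod.unitOfCoprime 2 hodd.coprime_two_left)⁻¹ : (ZMod l)ˣ) * (y - 1)) + 1
        = ((ZMod.unitOfCoprime 2 hodd.coprime_two_left : (ZMod l)ˣ)
            * ((ZMod.unitOfCoprime 2 hodd.coprime_two_left)⁻¹ : (ZMod l)ˣ)) * (y - 1) + 1 := by
          rw [h2]; ring
      _ = y := by rw [← Units.val_mul, mul_inv_cancel]; simp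

lemma reindex_prod (l : ℕ) (hpos : 0 < l) (hodd : Odd l) {M : Type*} [CommMonoid M]
    (g : Zeps l → M) :
    ∏ i ∈ Finset.range l, g (eps l ^ (2 * i + 1)) = ∏ j ∈ Finset.range l, g (eps l ^ j) := by
  haveI : NeZero l := ⟨hpos.ne'⟩
  have hval : ∀ m : ℕ, eps l ^ ((m : ZMod l)).val = eps l ^ m := by
    intro m
    rw [ZMod.val_natCast, ← eps_pow_mod]
  calc ∏ i ∈ Finset.range l, g (eps l ^ (2 * i + 1))
      = ∏ i ∈ Finset.range l, g (eps l ^ ((2 * (i : ZMod l) + 1).val)) := by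
        apply Finset.prod_congr rfl
        intro i _
        congr 1
        rw [show (2 * (i : ZMod l) + 1) = ((2 * i + 1 : ℕ) : ZMod l) by push_cast; ring,
          hval]
    _ = ∏ x : ZMod l, g (eps l ^ ((2 * x + 1).val)) :=
        prod_range_zmod l (fun x => g (eps l ^ ((2 * x + 1).val)))
    _ = ∏ y : ZMod l, g (eps l ^ (y.val)) :=
        Fintype.prod_equiv (two_mul_add_one_equiv l hodd) _ _ (fun x => rfl)
    _ = ∏ j ∈ Finset.range l, g (eps l ^ ((j : ZMod l)).val) :=
        (prod_range_zmod l (fun x => g (eps l ^ x.val))).symm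
    _ = ∏ j ∈ Finset.range l, g (eps l ^ j) := by
        apply Finset.prod_congr rfl
        intro j _
        rw [hval]

lemma main_prod (l : ℕ) (hpos : 0 < l) (hodd : Odd l) {A : Type*} [CommRing A]
    [Algebra (Zeps l) A] (u v : A) :
    ∏ i ∈ Finset.range l, (u + eps l ^ (2 * i + 1) • v) = u ^ l + v ^ l := by
  haveI := isDomain_zeps l hpos
  calc ∏ i ∈ Finset.range l, (u + eps l ^ (2 * i + 1) • v)
      = ∏ j ∈ Finset.range l, (u + eps l ^ j • v) :=
        reindex_prod l hpos hodd (fun c => u + c • v)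
    _ = ∏ j ∈ Finset.range l, (u - eps l ^ j • (-v)) := by
        apply Finset.prod_congr rfl
        intro j _
        rw [smul_neg v (r := eps l ^ j)]
        ring
    _ = u ^ l - (-v) ^ l := key_prod hpos (isPrimitiveRoot_eps l hpos) u (-v)
    _ = u ^ l + v ^ l := by rw [hodd.neg_pow, sub_neg_eq_add]

section QuantumPart

variable (l : ℕ)

lemma smul_eq (r : Zeps l) (x : OE l) : r • x = algebraMap (Zeps l) (OE l) r * x :=
  Algebra.smul_def r x

instance : IsScalarTower (Zeps l) (OE l) (OE l) :=
  ⟨fun s x y => by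
    show (s • x) * y = s • (x * y)
    rw [smul_eq, smul_eq, mul_assoc]⟩

instance : SMulCommClass (Zeps l) (OE l) (OE l) :=
  ⟨fun s x y => by
    show s • (x * y) = x * (s • y)
    rw [smul_eq, smul_eq, ← mul_assoc, Algebra.commutes, mul_assoc]⟩

lemma sm_mul (r : Zeps l) (x y : OE l) : (r • x) * y = r • (x * y) := smul_mul_assoc r x y
lemma mul_sm (r : Zeps l) (x y : OE l) : x * (r • y) = r • (x * y) := mul_smul_comm r x y
lemma sm_sm (r s : Zeps l) (x : OE l) : r • s • x = (r * s) • x := smul_smul r s x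
lemma sub_sm (r s : Zeps l) (x : OE l) : (r - s) • x = r • x - s • x := sub_smul r s x
lemma add_sm (r s : Zeps l) (x : OE l) : (r + s) • x = r • x + s • x := add_smul r s x
lemma one_sm (x : OE l) : (1 : Zeps l) • x = x := one_smul (Zeps l) x
lemma zero_sm (x : OE l) : (0 : Zeps l) • x = 0 := by rw [smul_eq, map_zero, zero_mul]

/-- `x = ad`. -/
def xx : OE l := aE l * dE l
/-- `y = bc`. -/
def yy : OE l := bE l * cE l
/-- coefficients `c_n = ε^{2n+1} - ε`. -/
def cc (n : ℕ) : Zeps l := eps l ^ (2 * n + 1) - eps l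
/-- the factors `f n = x + c_n • y`. -/
def ff (n : ℕ) : OE l := xx l + cc l n • yy l
/-- partial products `P n = f (n-1) * ⋯ * f 0`. -/
def PP : ℕ → OE l
  | 0 => 1
  | n + 1 => ff l n * PP n
/-- shifted partial products `P' n = f n * ⋯ * f 1`. -/
def PP' : ℕ → OE l
  | 0 => 1
  | n + 1 => ff l (n + 1) * PP' n

lemma xx_def : xx l = aE l * dE l := rfl
lemma yy_def : yy l = bE l * cE l := rfl
lemma ff_def (n : ℕ) : ff l n = xx l + cc l n • yy l := rfl
lemma PP_zero : PP l 0 = 1 := rfl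
lemma PP_succ (n : ℕ) : PP l (n + 1) = ff l n * PP l n := rfl
lemma PP'_zero : PP' l 0 = 1 := rfl
lemma PP'_succ (n : ℕ) : PP' l (n + 1) = ff l (n + 1) * PP' l n := rfl

lemma rel_ab : aE l * bE l = eps l • (bE l * aE l) := by
  have h := RingQuot.mkAlgHom_rel (Zeps l)
    (QMRel.ab (k := Zeps l) (q := eps l) (qi := epsInv l))
  simpa only [map_mul, map_smul, gen] using h

lemma rel_ac : aE l * cE l = eps l • (cE l * aE l) := by
  have h := RingQuot.mkAlgHom_rel (Zeps l)
    (QMRel.ac (k := Zeps l) (q := eps l) (qi := epsInv l))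
  simpa only [map_mul, map_smul, gen] using h

lemma rel_bd : bE l * dE l = eps l • (dE l * bE l) := by
  have h := RingQuot.mkAlgHom_rel (Zeps l)
    (QMRel.bd (k := Zeps l) (q := eps l) (qi := epsInv l))
  simpa only [map_mul, map_smul, gen] using h

lemma rel_cd : cE l * dE l = eps l • (dE l * cE l) := by
  have h := RingQuot.mkAlgHom_rel (Zeps l)
    (QMRel.cd (k := Zeps l) (q := eps l) (qi := epsInv l))
  simpa only [map_mul, map_smul, gen] using h

lemma rel_bc : bE l * cE l = cE l * bE l := by
  have h := RingQuot.mkAlgHom_rel (Zeps l)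
    (QMRel.bc (k := Zeps l) (q := eps l) (qi := epsInv l))
  simpa only [map_mul, map_smul, gen] using h

lemma rel_ad : aE l * dE l = dE l * aE l + (eps l - epsInv l) • (bE l * cE l) := by
  have h := RingQuot.mkAlgHom_rel (Zeps l)
    (QMRel.ad (k := Zeps l) (q := eps l) (qi := epsInv l))
  simpa only [map_mul, map_smul, map_add, gen] using h

lemma a_y : aE l * yy l = (eps l ^ 2) • (yy l * aE l) := by
  rw [yy_def]
  calc aE l * (bE l * cE l) = (aE l * bE l) * cE l := (mul_assoc _ _ _).symm
    _ = (eps l • (bE l * aE l)) * cE l := by rw [rel_ab]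
    _ = eps l • (bE l * (aE l * cE l)) := by rw [sm_mul, mul_assoc]
    _ = eps l • (bE l * (eps l • (cE l * aE l))) := by rw [rel_ac]
    _ = eps l • (eps l • (bE l * (cE l * aE l))) := by rw [mul_sm]
    _ = (eps l * eps l) • ((bE l * cE l) * aE l) := by rw [sm_sm, mul_assoc]
    _ = (eps l ^ 2) • ((bE l * cE l) * aE l) := by rw [sq]

lemma y_d : yy l * dE l = (eps l ^ 2) • (dE l * yy l) := by
  rw [yy_def]
  calc (bE l * cE l) * dE l = bE l * (cE l * dE l) := mul_assoc _ _ _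
    _ = bE l * (eps l • (dE l * cE l)) := by rw [rel_cd]
    _ = eps l • ((bE l * dE l) * cE l) := by rw [mul_sm, mul_assoc]
    _ = eps l • ((eps l • (dE l * bE l)) * cE l) := by rw [rel_bd]
    _ = eps l • (eps l • (dE l * (bE l * cE l))) := by rw [sm_mul, mul_assoc]
    _ = (eps l ^ 2) • (dE l * (bE l * cE l)) := by rw [sm_sm, sq]

lemma hinv2 : (epsInv l ^ 2) * (eps l ^ 2) = 1 := by
  rw [← mul_pow, mul_comm (epsInv l) (eps l), eps_mul_epsInv, one_pow]

lemma d_y : dE l * yy l = (epsInv l ^ 2) • (yy l * dE l) := by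
  rw [y_d, sm_sm, hinv2, one_sm]

lemma x_y : xx l * yy l = yy l * xx l := by
  rw [xx_def]
  calc aE l * dE l * yy l = aE l * (dE l * yy l) := mul_assoc _ _ _
    _ = (epsInv l ^ 2) • (aE l * yy l * dE l) := by
        rw [d_y, mul_sm, mul_assoc]
    _ = (epsInv l ^ 2) • ((eps l ^ 2) • (yy l * aE l) * dE l) := by rw [a_y]
    _ = ((epsInv l ^ 2) * (eps l ^ 2)) • (yy l * (aE l * dE l)) := by
        rw [sm_mul, sm_sm, mul_assoc]
    _ = yy l * (aE l * dE l) := by rw [hinv2, one_sm]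

lemma d_a : dE l * aE l = xx l - (eps l - epsInv l) • yy l := by
  rw [xx_def, yy_def, rel_ad]
  abel

lemma a_x : aE l * xx l = xx l * aE l + ((eps l - epsInv l) * eps l ^ 2) • (yy l * aE l) := by
  have key : xx l * aE l
      = aE l * xx l - ((eps l - epsInv l) * eps l ^ 2) • (yy l * aE l) := by
    calc xx l * aE l = aE l * (dE l * aE l) := by rw [xx_def, mul_assoc]
      _ = aE l * (xx l - (eps l - epsInv l) • yy l) := by rw [d_a]
      _ = aE l * xx l - (eps l - epsInv l) • (aE l * yy l) := by
          rw [mul_sub, mul_sm]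
      _ = aE l * xx l - (eps l - epsInv l) • ((eps l ^ 2) • (yy l * aE l)) := by rw [a_y]
      _ = aE l * xx l - ((eps l - epsInv l) * eps l ^ 2) • (yy l * aE l) := by rw [sm_sm]
  rw [key]
  abel

lemma a_f (n : ℕ) : aE l * ff l n = ff l (n + 1) * aE l := by
  rw [ff_def, ff_def]
  calc aE l * (xx l + cc l n • yy l)
      = aE l * xx l + cc l n • (aE l * yy l) := by rw [mul_add, mul_sm]
    _ = xx l * aE l + ((eps l - epsInv l) * eps l ^ 2) • (yy l * aE l)
          + (cc l n * eps l ^ 2) • (yy l * aE l) := by rw [a_x, a_y, sm_sm]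
    _ = xx l * aE l + (((eps l - epsInv l) * eps l ^ 2) + cc l n * eps l ^ 2) • (yy l * aE l) := by
        rw [add_assoc, ← add_sm]
    _ = xx l * aE l + cc l (n + 1) • (yy l * aE l) := by
        congr 1
        congr 1
        unfold cc
        linear_combination (-(eps l)) * eps_mul_epsInv l
    _ = (xx l + cc l (n + 1) • yy l) * aE l := by rw [add_mul, sm_mul]

lemma a_PP (n : ℕ) : aE l * PP l n = PP' l n * aE l := by
  induction n with
  | zero => rw [PP_zero, PP'_zero, mul_one, one_mul]
  | succ n ih =>
      rw [PP_succ, PP'_succ]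
      calc aE l * (ff l n * PP l n) = (aE l * ff l n) * PP l n := (mul_assoc _ _ _).symm
        _ = (ff l (n + 1) * aE l) * PP l n := by rw [a_f]
        _ = ff l (n + 1) * (aE l * PP l n) := mul_assoc _ _ _
        _ = ff l (n + 1) * (PP' l n * aE l) := by rw [ih]
        _ = (ff l (n + 1) * PP' l n) * aE l := (mul_assoc _ _ _).symm

lemma ff_zero : ff l 0 = aE l * dE l := by
  rw [ff_def, xx_def]
  have : cc l 0 = 0 := by
    unfold cc
    norm_num
  rw [this, zero_sm, add_zero]

lemma PP'_ff_zero (n : ℕ) : PP' l n * ff l 0 = PP l (n + 1) := by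
  induction n with
  | zero => rw [PP'_zero, one_mul, PP_succ, PP_zero, mul_one]
  | succ n ih =>
      rw [PP'_succ, mul_assoc, ih]
      exact (PP_succ l (n + 1)).symm

lemma ad_pow (n : ℕ) : aE l ^ n * dE l ^ n = PP l n := by
  induction n with
  | zero => rw [pow_zero, pow_zero, one_mul, PP_zero]
  | succ n ih =>
      calc aE l ^ (n + 1) * dE l ^ (n + 1)
          = (aE l * aE l ^ n) * (dE l ^ n * dE l) := by rw [pow_succ', pow_succ]
        _ = aE l * ((aE l ^ n * dE l ^ n) * dE l) := by
            rw [mul_assoc, ← mul_assoc (aE l ^ n)]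
        _ = aE l * (PP l n * dE l) := by rw [ih]
        _ = (aE l * PP l n) * dE l := (mul_assoc _ _ _).symm
        _ = (PP' l n * aE l) * dE l := by rw [a_PP]
        _ = PP' l n * (aE l * dE l) := mul_assoc _ _ _
        _ = PP' l n * ff l 0 := by rw [ff_zero]
        _ = PP l (n + 1) := PP'_ff_zero l n

lemma c_bpow (n : ℕ) : cE l * bE l ^ n = bE l ^ n * cE l := by
  induction n with
  | zero => rw [pow_zero, mul_one, one_mul]
  | succ n ih =>
      calc cE l * bE l ^ (n + 1) = (cE l * bE l) * bE l ^ n := by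
            rw [pow_succ', ← mul_assoc]
        _ = bE l * (cE l * bE l ^ n) := by rw [← rel_bc, mul_assoc]
        _ = (bE l * bE l ^ n) * cE l := by rw [ih, mul_assoc]
        _ = bE l ^ (n + 1) * cE l := by rw [← pow_succ']

lemma y_pow (n : ℕ) : yy l ^ n = bE l ^ n * cE l ^ n := by
  induction n with
  | zero => rw [pow_zero, pow_zero, pow_zero, one_mul]
  | succ n ih =>
      calc yy l ^ (n + 1) = (bE l * cE l) * yy l ^ n := by rw [pow_succ', yy_def]
        _ = (bE l * cE l) * (bE l ^ n * cE l ^ n) := by rw [ih]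
        _ = bE l * ((cE l * bE l ^ n) * cE l ^ n) := by
            rw [mul_assoc, ← mul_assoc (cE l)]
        _ = bE l * ((bE l ^ n * cE l) * cE l ^ n) := by rw [c_bpow]
        _ = (bE l * bE l ^ n) * (cE l * cE l ^ n) := by
            rw [mul_assoc (bE l ^ n), ← mul_assoc, ← mul_assoc]
        _ = bE l ^ (n + 1) * cE l ^ (n + 1) := by rw [← pow_succ', ← pow_succ']

lemma DE_eq : DE l = xx l - eps l • yy l := rfl

lemma ff_DE (n : ℕ) : ff l n = DE l + (eps l ^ (2 * n + 1)) • yy l := by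
  rw [ff_def, DE_eq]
  unfold cc
  rw [sub_sm]
  abel

lemma D_y : DE l * yy l = yy l * DE l := by
  rw [DE_eq, sub_mul, mul_sub, sm_mul, mul_sm, x_y]

/-- The commutative subalgebra generated by `D` and `y = bc`. -/
def SA : Subalgebra (Zeps l) (OE l) := Algebra.adjoin (Zeps l) {DE l, yy l}

noncomputable instance : CommRing (SA l) :=
  Algebra.adjoinCommRingOfComm (Zeps l) (by
    rintro x hx y hy
    simp only [Set.mem_insert_iff, Set.mem_singleton_iff] at hx hy
    rcases hx with rfl | rfl <;> rcases hy with rfl | rfl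
    · rfl
    · exact D_y l
    · exact (D_y l).symm
    · rfl)

def UU : SA l := ⟨DE l, Algebra.subset_adjoin (by simp)⟩
def VV : SA l := ⟨yy l, Algebra.subset_adjoin (by simp)⟩

lemma PP_eq_val (n : ℕ) :
    PP l n = ((∏ i ∈ Finset.range n, (UU l + eps l ^ (2 * i + 1) • VV l) : SA l) : OE l) := by
  induction n with
  | zero => rw [PP_zero, Finset.prod_range_zero]; rfl
  | succ n ih =>
      rw [Finset.prod_range_succ_comm, PP_succ, ih]
      push_cast
      congr 1
      rw [ff_DE]
      rfl

end QuantumPart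


lemma key_final (l : ℕ) (hpos : 0 < l) (hodd : Odd l) :
    PP l l = DE l ^ l + yy l ^ l := by
  have h3 := @main_prod l hpos hodd (SA l) _ (Subalgebra.algebra _) (UU l) (VV l)
  have h4 := congrArg (Subtype.val) h3
  rw [PP_eq_val]
  refine h4.trans ?_
  push_cast
  rfl

end DEProof

/-- For `ℓ` odd, `D_ε^ℓ = a^ℓ d^ℓ - b^ℓ c^ℓ` in `O_ε(M_2)`. -/
theorem DE_pow_l (l : ℕ) (hpos : 0 < l) (hodd : Odd l) :
    DE l ^ l = aE l ^ l * dE l ^ l - bE l ^ l * cE l ^ l := by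
  have h : aE l ^ l * dE l ^ l = DE l ^ l + bE l ^ l * cE l ^ l := by
    rw [DEProof.ad_pow, DEProof.key_final l hpos hodd, DEProof.y_pow]
  exact eq_sub_iff_add_eq.mpr h.symm
end
end

section
/- The map sending the generator t_{i,j} of the commutative polynomial ring ℤ[t_{i,j}] to the class of t_{i,j}^ℓ in O_ε(M_2) extends to a ring homomorphism (quantum Frobenius morphism) whose image is contained in the centre of O_ε(M_2), for ℓ odd and ε a primitive ℓ-th root of unity. -/
open LaurentPolynomial FreeAlgebra

noncomputable section

-- scalar facts
lemma eps_mul_epsInv_s9 (l : ℕ) : eps l * epsInv l = 1 := by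
  rw [← map_mul, ← T_add]
  norm_num

lemma eps_pow (l : ℕ) : (eps l) ^ l = 1 := by
  have h : Polynomial.cyclotomic l ℤ ∣ Polynomial.X ^ l - 1 :=
    Polynomial.cyclotomic.dvd_X_pow_sub_one l ℤ
  have h2 : (Polynomial.aeval (T 1 : Rq)) (Polynomial.cyclotomic l ℤ) ∣
      (T 1 : Rq) ^ l - 1 := by
    obtain ⟨u, hu⟩ := h
    exact ⟨Polynomial.aeval (T 1 : Rq) u, by
      rw [← map_mul, ← hu]; simp⟩
  have h3 : (Ideal.Quotient.mk _ ((T 1 : Rq) ^ l - 1) : Zeps l) = 0 := by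
    rw [Ideal.Quotient.eq_zero_iff_mem]
    exact Ideal.mem_span_singleton.mpr h2
  have h4 := sub_eq_zero.mp (by simpa using h3)
  show (Ideal.Quotient.mk _ (T 1 : Rq) : Zeps l) ^ l = 1
  rw [← map_pow, T_pow]
  simpa [T_pow, mul_comm] using h4

section Generic
variable {k : Type} [CommRing k] {q qi : k}

lemma gen_rel {x y : FreeAlgebra k (Fin 4)} (h : QMRel k q qi x y) :
    RingQuot.mkAlgHom k (QMRel k q qi) x = RingQuot.mkAlgHom k (QMRel k q qi) y :=
  RingQuot.mkAlgHom_rel k h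

variable (q qi) in
lemma rel_ab_s9 : gen k q qi 0 * gen k q qi 1 = q • (gen k q qi 1 * gen k q qi 0) := by
  simpa [gen] using gen_rel (QMRel.ab (k := k) (q := q) (qi := qi))

variable (q qi) in
lemma rel_ac_s9 : gen k q qi 0 * gen k q qi 2 = q • (gen k q qi 2 * gen k q qi 0) := by
  simpa [gen] using gen_rel (QMRel.ac (k := k) (q := q) (qi := qi))

variable (q qi) in
lemma rel_bd_s9 : gen k q qi 1 * gen k q qi 3 = q • (gen k q qi 3 * gen k q qi 1) := by
  simpa [gen] using gen_rel (QMRel.bd (k := k) (q := q) (qi := qi))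

variable (q qi) in
lemma rel_cd_s9 : gen k q qi 2 * gen k q qi 3 = q • (gen k q qi 3 * gen k q qi 2) := by
  simpa [gen] using gen_rel (QMRel.cd (k := k) (q := q) (qi := qi))

variable (q qi) in
lemma rel_bc_s9 : gen k q qi 1 * gen k q qi 2 = gen k q qi 2 * gen k q qi 1 := by
  simpa [gen] using gen_rel (QMRel.bc (k := k) (q := q) (qi := qi))

variable (q qi) in
lemma rel_ad_s9 : gen k q qi 0 * gen k q qi 3 =
    gen k q qi 3 * gen k q qi 0 + (q - qi) • (gen k q qi 1 * gen k q qi 2) := by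
  simpa [gen] using gen_rel (QMRel.ad (k := k) (q := q) (qi := qi))

end Generic

-- generic q-commutation power lemmas
section Pow
variable {k : Type} [CommRing k] {A : Type} [Ring A] [Algebra k A]

lemma pow_qcomm_left {x y : A} {q : k} (h : x * y = q • (y * x)) (n : ℕ) :
    x ^ n * y = q ^ n • (y * x ^ n) := by
  induction n with
  | zero => simp
  | succ n ih =>
    calc x ^ (n + 1) * y = x ^ n * (x * y) := by rw [pow_succ, mul_assoc]
    _ = q • (x ^ n * y * x) := by rw [h, mul_smul_comm, mul_assoc]
    _ = q • (q ^ n • (y * x ^ n) * x) := by rw [ih]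
    _ = q ^ (n + 1) • (y * x ^ (n + 1)) := by
        rw [smul_mul_assoc, smul_smul, mul_assoc, ← pow_succ, ← pow_succ']

lemma pow_qcomm_right {x y : A} {q : k} (h : x * y = q • (y * x)) (n : ℕ) :
    x * y ^ n = q ^ n • (y ^ n * x) := by
  induction n with
  | zero => simp
  | succ n ih =>
    calc x * y ^ (n + 1) = x * y ^ n * y := by rw [pow_succ, mul_assoc]
    _ = q ^ n • (y ^ n * (x * y)) := by rw [ih, smul_mul_assoc, mul_assoc]
    _ = q ^ n • (y ^ n * (q • (y * x))) := by rw [h]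
    _ = q ^ (n + 1) • (y ^ (n + 1) * x) := by
        rw [mul_smul_comm, smul_smul, ← pow_succ, pow_succ y, mul_assoc]

end Pow

section Core
variable {k : Type} [CommRing k] (q qi : k)

local notation "ga" => gen k q qi 0
local notation "gb" => gen k q qi 1
local notation "gc" => gen k q qi 2
local notation "gd" => gen k q qi 3

lemma a_bc : ga * (gb * gc) = (q * q) • ((gb * gc) * ga) := by
  calc ga * (gb * gc) = (ga * gb) * gc := (mul_assoc _ _ _).symm
  _ = q • (gb * (ga * gc)) := by rw [rel_ab_s9, smul_mul_assoc, mul_assoc]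
  _ = q • (gb * (q • (gc * ga))) := by rw [rel_ac_s9]
  _ = (q * q) • ((gb * gc) * ga) := by rw [mul_smul_comm, smul_smul, mul_assoc]

lemma bc_d : (gb * gc) * gd = (q * q) • (gd * (gb * gc)) := by
  calc (gb * gc) * gd = gb * (gc * gd) := mul_assoc _ _ _
  _ = q • ((gb * gd) * gc) := by rw [rel_cd_s9, mul_smul_comm, mul_assoc]
  _ = q • ((q • (gd * gb)) * gc) := by rw [rel_bd_s9]
  _ = (q * q) • (gd * (gb * gc)) := by rw [smul_mul_assoc, smul_smul, mul_assoc]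

lemma a_pow_d (n : ℕ) : ga ^ (n + 1) * gd = gd * ga ^ (n + 1) +
    ((∑ i ∈ Finset.range (n + 1), (q * q) ^ i) * (q - qi)) • ((gb * gc) * ga ^ n) := by
  induction n with
  | zero => simpa using rel_ad_s9 q qi
  | succ n ih =>
    have step1 : ga ^ (n + 2) * gd = ga * (ga ^ (n + 1) * gd) := by
      rw [pow_succ', mul_assoc]
    rw [step1, ih, mul_add, mul_smul_comm, ← mul_assoc, ← mul_assoc, rel_ad_s9, a_bc,
      smul_mul_assoc, smul_smul]
    rw [add_mul, smul_mul_assoc]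
    simp only [mul_assoc]
    simp only [← pow_succ']
    rw [add_assoc, ← add_smul]
    congr 2
    rw [geom_sum_succ (x := q * q) (n := n + 1)]
    ring

lemma a_d_pow (n : ℕ) : ga * gd ^ (n + 1) = gd ^ (n + 1) * ga +
    ((∑ i ∈ Finset.range (n + 1), (q * q) ^ i) * (q - qi)) • (gd ^ n * (gb * gc)) := by
  induction n with
  | zero => simpa using rel_ad_s9 q qi
  | succ n ih =>
    have step1 : ga * gd ^ (n + 2) = (ga * gd ^ (n + 1)) * gd := by
      rw [pow_succ, mul_assoc]
    rw [step1, ih, add_mul, smul_mul_assoc, mul_assoc, mul_assoc, rel_ad_s9, bc_d,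
      mul_smul_comm, smul_smul]
    rw [mul_add, mul_smul_comm]
    simp only [← mul_assoc]
    simp only [← pow_succ]
    rw [add_assoc, ← add_smul]
    congr 2
    rw [geom_sum_succ (x := q * q) (n := n + 1)]
    ring

lemma coeff_zero {l : ℕ} (hq : q * qi = 1) (hl : q ^ l = 1) :
    (∑ i ∈ Finset.range l, (q * q) ^ i) * (q - qi) = 0 := by
  have h1 : q - qi = (q * q - 1) * qi := by
    have h2 : q * q * qi = q := by rw [mul_assoc, hq, mul_one]
    rw [sub_mul, h2, one_mul]
  rw [h1, ← mul_assoc, geom_sum_mul, mul_pow, hl, one_mul, sub_self, zero_mul]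

end Core

section PowComm
variable {k : Type} [CommRing k] {A : Type} [Ring A] [Algebra k A]

lemma comm_qpow_left {x y : A} {q : k} {l : ℕ} (h : x * y = q • (y * x))
    (hl : q ^ l = 1) : Commute (x ^ l) y :=
  show x ^ l * y = y * x ^ l by rw [pow_qcomm_left h l, hl, one_smul]

lemma comm_qpow_right {x y : A} {q : k} {l : ℕ} (h : x * y = q • (y * x))
    (hl : q ^ l = 1) : Commute (y ^ l) x :=
  (show x * y ^ l = y ^ l * x by rw [pow_qcomm_right h l, hl, one_smul]).symm

end PowComm

section Central
variable {k : Type} [CommRing k] (q qi : k)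

lemma comm_apow_d (hq : q * qi = 1) {l : ℕ} (hlpos : 0 < l) (hl : q ^ l = 1) :
    Commute (gen k q qi 0 ^ l) (gen k q qi 3) := by
  show gen k q qi 0 ^ l * gen k q qi 3 = gen k q qi 3 * gen k q qi 0 ^ l
  rcases l with _ | n
  · exact absurd hlpos (by omega)
  · rw [a_pow_d q qi n, coeff_zero q qi hq hl, zero_smul, add_zero]

lemma comm_dpow_a (hq : q * qi = 1) {l : ℕ} (hlpos : 0 < l) (hl : q ^ l = 1) :
    Commute (gen k q qi 3 ^ l) (gen k q qi 0) := by
  refine (show gen k q qi 0 * gen k q qi 3 ^ l = gen k q qi 3 ^ l * gen k q qi 0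
    from ?_).symm
  rcases l with _ | n
  · exact absurd hlpos (by omega)
  · rw [a_d_pow q qi n, coeff_zero q qi hq hl, zero_smul, add_zero]

lemma gen_pow_commute (hq : q * qi = 1) {l : ℕ} (hlpos : 0 < l) (hl : q ^ l = 1)
    (i j : Fin 4) : Commute (gen k q qi i ^ l) (gen k q qi j) := by
  fin_cases i <;> fin_cases j <;>
    first
    | exact (Commute.refl _).pow_left l
    | exact comm_qpow_left (rel_ab_s9 q qi) hl
    | exact comm_qpow_left (rel_ac_s9 q qi) hl
    | exact comm_qpow_left (rel_bd_s9 q qi) hl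
    | exact comm_qpow_left (rel_cd_s9 q qi) hl
    | exact comm_qpow_right (rel_ab_s9 q qi) hl
    | exact comm_qpow_right (rel_ac_s9 q qi) hl
    | exact comm_qpow_right (rel_bd_s9 q qi) hl
    | exact comm_qpow_right (rel_cd_s9 q qi) hl
    | exact Commute.pow_left (rel_bc_s9 q qi) l
    | exact Commute.pow_left ((rel_bc_s9 q qi).symm) l
    | exact comm_apow_d q qi hq hlpos hl
    | exact comm_dpow_a q qi hq hlpos hl

lemma commute_of_commute_gen {z : QM k q qi}
    (h : ∀ i, Commute z (gen k q qi i)) (x : QM k q qi) : Commute z x := by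
  obtain ⟨y, rfl⟩ := RingQuot.mkAlgHom_surjective k (QMRel k q qi) x
  induction y using FreeAlgebra.induction with
  | grade0 r =>
    rw [AlgHom.commutes]
    exact (Algebra.commutes r z).symm
  | grade1 i => exact h i
  | mul a b ha hb => rw [map_mul]; exact ha.mul_right hb
  | add a b ha hb => rw [map_add]; exact ha.add_right hb

lemma gen_pow_central (hq : q * qi = 1) {l : ℕ} (hlpos : 0 < l) (hl : q ^ l = 1)
    (i : Fin 4) : (gen k q qi i) ^ l ∈ Subring.center (QM k q qi) := by
  rw [Subring.mem_center_iff]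
  intro x
  exact ((commute_of_commute_gen q qi
    (fun j => gen_pow_commute q qi hq hlpos hl i j) x).symm)

end Central

/-- The quantum Frobenius morphism: the map sending each generator `t_{i,j}`
of the polynomial ring `ℤ[t_{i,j}]` to the class of `t_{i,j}^ℓ` extends to a
ring homomorphism into `O_ε(M_2)` whose image is central. -/
theorem quantum_Frobenius (l : ℕ) (hpos : 0 < l) (hodd : Odd l) :
    ∃ f : MvPolynomial (Fin 4) ℤ →+* OE l,
      (∀ i : Fin 4, f (MvPolynomial.X i) = gen _ _ _ i ^ l) ∧
      (∀ p : MvPolynomial (Fin 4) ℤ, ∀ x : OE l, Commute (f p) x) := by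
  have hq := eps_mul_epsInv_s9 l
  have hl := eps_pow l
  let g : Fin 4 → Subring.center (OE l) := fun i =>
    ⟨gen (Zeps l) (eps l) (epsInv l) i ^ l,
      gen_pow_central (eps l) (epsInv l) hq hpos hl i⟩
  let f0 : MvPolynomial (Fin 4) ℤ →+* Subring.center (OE l) :=
    MvPolynomial.eval₂Hom (Int.castRingHom _) g
  refine ⟨(Subring.center (OE l)).subtype.comp f0, ?_, ?_⟩
  · intro i
    simp [f0, g]
  · intro p x
    have h2 := (f0 p).2
    rw [Subring.mem_center_iff] at h2
    exact (h2 x).symm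
end
end
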